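/- Let E be a directed graph and G_E its graph groupoid. Then G_E is effective (the interior of the isotropy bundle Iso(G_E)={γ : d(γ)=r(γ)} equals the unit space G_E⁰) if and only if E satisfies condition (L), i.e., every cycle in E has an exit. -/

import Mathlib

open Set

section Graph

variable {V E : Type*} (gs gr : E → V)

/-- `(v, l)` is a finite path of the directed graph with source map `gs` and range map
`gr`: the edges of `l` compose (`gr eᵢ = gs eᵢ₊₁`) and start at `v` (`l = []` gives the
path of length zero at `v`). -/
def IsPathL (v : V) (l : List E) : Prop :=
  (∀ e ∈ l.head?, gs e = v) ∧ l.Chain' fun a b => gr a = gs b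

/-- The range vertex of the finite path `(v, l)`. -/
def pathRng (v : V) (l : List E) : V := l.foldl (fun _ e => gr e) v

/-- A vertex is regular if it emits at least one and at most finitely many edges. -/
def RegularVert (v : V) : Prop :=
  {e : E | gs e = v}.Finite ∧ {e : E | gs e = v}.Nonempty

/-- A boundary path: either a finite path whose range is not a regular vertex, or an
infinite path (an infinite composable sequence of edges). -/
def IsBoundary : (V × List E) ⊕ (ℕ → E) → Prop
  | .inl (v, l) => IsPathL gs gr v l ∧ ¬ RegularVert gs (pathRng gr v l)
  | .inr f => ∀ n, gr (f n) = gs (f (n + 1))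

/-- The boundary path space `X` of the graph: the unit space of the graph groupoid. -/
def BPath := {x : (V × List E) ⊕ (ℕ → E) // IsBoundary gs gr x}

/-- The boundary path `x` starts with the finite path `(w, m)`. -/
def HasPrefixP (w : V) (m : List E) (x : BPath gs gr) : Prop :=
  match x.1 with
  | .inl (v, l) => v = w ∧ m <+: l
  | .inr f => (m = [] → gs (f 0) = w) ∧ (∀ e ∈ m.head?, gs e = w) ∧
      ∀ (i : ℕ) (h : i < m.length), f i = m.get ⟨i, h⟩

/-- The cylinder set `Z(μ) = {μ x : x ∈ X}` of a finite path `μ = (w, m)`. -/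
def ZP (w : V) (m : List E) : Set (BPath gs gr) := {x | HasPrefixP gs gr w m x}

/-- The topology on the boundary path space `X = G_E⁰`, with basic compact open sets
`Z(μ∖F) = Z(μ) ∖ ⋃_{e ∈ F} Z(μe)` for finite sets `F` of edges with source `r(μ)`. -/
def unitTop : TopologicalSpace (BPath gs gr) :=
  TopologicalSpace.generateFrom
    {A | ∃ (w : V) (m : List E) (F : Set E), F.Finite ∧ IsPathL gs gr w m ∧
      (∀ e ∈ F, gs e = pathRng gr w m) ∧
      A = ZP gs gr w m \ ⋃ e ∈ F, ZP gs gr w (m ++ [e])}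

/-- `x` and `y` have a common tail: removing the first `m` edges of `x` and the first
`n` edges of `y` yields the same boundary path. -/
def AgreeFrom (m n : ℕ) (x y : BPath gs gr) : Prop :=
  match x.1, y.1 with
  | .inl (v, l), .inl (w, t) =>
      m ≤ l.length ∧ n ≤ t.length ∧
      pathRng gr v (l.take m) = pathRng gr w (t.take n) ∧ l.drop m = t.drop n
  | .inr f, .inr g => ∀ i : ℕ, f (m + i) = g (n + i)
  | _, _ => False

/-- The graph groupoid `G_E = {(αx, |α| − |β|, βx)}`, as triples `(x, k, y)` of
boundary paths `x, y` having a common tail, with `k` the difference of the lengths of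
the removed prefixes.  Here `r (x,k,y) = x` and `d (x,k,y) = y`; composition is
`(x,k,y)(y,l,z) = (x,k+l,z)` and inversion `(x,k,y)⁻¹ = (y,−k,x)`. -/
def GrGpd := {γ : BPath gs gr × ℤ × BPath gs gr //
  ∃ m n : ℕ, AgreeFrom gs gr m n γ.1 γ.2.2 ∧ γ.2.1 = (m : ℤ) - (n : ℤ)}

/-- The basic bisection `Z(μ, ν) = {(μz, |μ|−|ν|, νz)}` of the graph groupoid. -/
def ZZ (u : V) (p : List E) (w : V) (q : List E) : Set (GrGpd gs gr) :=
  {γ | HasPrefixP gs gr u p γ.1.1 ∧ HasPrefixP gs gr w q γ.1.2.2 ∧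
    γ.1.2.1 = (p.length : ℤ) - (q.length : ℤ) ∧
    AgreeFrom gs gr p.length q.length γ.1.1 γ.1.2.2}

/-- The topology of the graph groupoid `G_E`, with basic compact open bisections
`Z((μ,ν)∖F) = Z(μ,ν) ∖ ⋃_{α ∈ F} Z(μα, να)`, making it a Hausdorff ample groupoid. -/
def gpdTop : TopologicalSpace (GrGpd gs gr) :=
  TopologicalSpace.generateFrom
    {A | ∃ (u : V) (p : List E) (w : V) (q : List E) (F : Set (List E)), F.Finite ∧
      IsPathL gs gr u p ∧ IsPathL gs gr w q ∧ pathRng gr u p = pathRng gr w q ∧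
      (∀ α ∈ F, IsPathL gs gr (pathRng gr u p) α) ∧
      A = ZZ gs gr u p w q \ ⋃ α ∈ F, ZZ gs gr u (p ++ α) w (q ++ α)}

/-- A cycle: a nonempty closed path whose edges have pairwise distinct sources. -/
def IsCycleP (v : V) (l : List E) : Prop :=
  IsPathL gs gr v l ∧ l ≠ [] ∧ pathRng gr v l = v ∧ (l.map gs).Nodup

/-- The path `l` has an exit: some edge `e` shares its source with an edge of `l` but
differs from it. -/
def HasExitP (l : List E) : Prop := ∃ e a : E, a ∈ l ∧ gs e = gs a ∧ e ≠ a

end Graph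


section Helpers

variable {V E : Type*} {gs gr : E → V}

lemma pathRng_append (v : V) (l l' : List E) :
    pathRng gr v (l ++ l') = pathRng gr (pathRng gr v l) l' :=
  List.foldl_append

lemma pathRng_concat (v : V) (l : List E) (e : E) :
    pathRng gr v (l ++ [e]) = gr e := by
  rw [pathRng_append]; rfl

lemma isPathL_nil (v : V) : IsPathL gs gr v [] := ⟨by simp, List.isChain_nil⟩

/-- The canonical list of the first `n` edges of an infinite path. -/
def seqList (f : ℕ → E) (n : ℕ) : List E := (List.range n).map f

@[simp] lemma seqList_length (f : ℕ → E) (n : ℕ) : (seqList f n).length = n := by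
  simp [seqList]

lemma seqList_get (f : ℕ → E) (n i : ℕ) (h : i < (seqList f n).length) :
    (seqList f n).get ⟨i, h⟩ = f i := by
  simp [seqList]

lemma seqList_succ (f : ℕ → E) (n : ℕ) :
    seqList f (n + 1) = seqList f n ++ [f n] := by
  simp [seqList, List.range_succ]

lemma seqList_take (f : ℕ → E) (m n : ℕ) (h : m ≤ n) :
    (seqList f n).take m = seqList f m := by
  simp [seqList, ← List.map_take, List.take_range, Nat.min_eq_left h]

lemma seqList_prefix (f : ℕ → E) {m n : ℕ} (h : m ≤ n) :
    seqList f m <+: seqList f n := by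
  rw [← seqList_take f m n h]; exact List.take_prefix _ _

lemma seqList_drop (f : ℕ → E) (m n : ℕ) :
    (seqList f n).drop m = seqList (fun t => f (m + t)) (n - m) := by
  apply List.ext_get
  · simp
  · intro i h1 h2
    simp [seqList]

lemma pathRng_get (v : V) (l : List E) (h : l ≠ []) :
    pathRng gr v l = gr (l.getLast h) := by
  conv_lhs => rw [← List.dropLast_append_getLast h]
  rw [pathRng_concat]

/-- Composability of an infinite path. -/
def InfPath (gs gr : E → V) (f : ℕ → E) : Prop := ∀ n, gr (f n) = gs (f (n + 1))

lemma pathRng_seqList {f : ℕ → E} (hf : InfPath gs gr f) (n : ℕ) :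
    pathRng gr (gs (f 0)) (seqList f n) = gs (f n) := by
  induction n with
  | zero => rfl
  | succ n ih => rw [seqList_succ, pathRng_concat, hf n]

lemma isPathL_seqList {f : ℕ → E} (hf : InfPath gs gr f) (n : ℕ) :
    IsPathL gs gr (gs (f 0)) (seqList f n) := by
  induction n with
  | zero => exact isPathL_nil _
  | succ n ih =>
    rw [seqList_succ]
    refine ⟨?_, ?_⟩
    · intro e he
      rcases n with _ | n
      · simp [seqList] at he; simp [he]
      · rw [List.head?_append_of_ne_nil] at he
        · exact ih.1 e he
        · simp [seqList, List.range_succ]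
    · show List.IsChain _ _; rw [List.isChain_append]
      refine ⟨ih.2, List.isChain_singleton _, ?_⟩
      intro x hx y hy
      simp at hy
      subst hy
      rcases n with _ | n
      · simp [seqList] at hx
      · have hne : seqList f (n+1) ≠ [] := by simp [seqList]
        rw [List.getLast?_eq_getLast hne] at hx
        simp at hx
        subst hx
        have := pathRng_seqList hf (n+1)
        rw [pathRng_get _ _ hne] at this
        rw [this]

lemma isPathL_concat {v : V} {l : List E} (hl : IsPathL gs gr v l) {e : E}
    (he : gs e = pathRng gr v l) : IsPathL gs gr v (l ++ [e]) := by
  refine ⟨?_, ?_⟩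
  · intro a ha
    rcases l with _ | ⟨b, l⟩
    · simp at ha; subst ha; exact he
    · simp at ha ⊢; subst ha; exact hl.1 _ rfl
  · show List.IsChain _ _; rw [List.isChain_append]
    refine ⟨hl.2, List.isChain_singleton _, ?_⟩
    intro x hx y hy
    simp at hy
    subst hy
    have hne : l ≠ [] := by rintro rfl; simp at hx
    rw [List.getLast?_eq_getLast hne] at hx
    simp at hx
    subst hx
    rw [← pathRng_get (gr := gr) v l hne, ← he]


/-- The starting vertex of a (boundary) path. -/
def startV (gs : E → V) : (V × List E) ⊕ (ℕ → E) → V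
  | .inl (w, _) => w
  | .inr g => gs (g 0)

/-- Prepend a list of edges to an infinite path. -/
def extSeq (L : List E) (g : ℕ → E) : ℕ → E :=
  fun i => if h : i < L.length then L.get ⟨i, h⟩ else g (i - L.length)

/-- Prepend a finite path (starting at `v`, edge list `L`) to a path. -/
def extP (v : V) (L : List E) : (V × List E) ⊕ (ℕ → E) → (V × List E) ⊕ (ℕ → E)
  | .inl (_, t) => .inl (v, L ++ t)
  | .inr g => .inr (extSeq L g)

/-- The `i`-th edge of a path, if any. -/
def entry : (V × List E) ⊕ (ℕ → E) → ℕ → Option E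
  | .inl (_, t), i => t[i]?
  | .inr g, i => some (g i)

lemma entry_extP {v : V} {L : List E} {z : (V × List E) ⊕ (ℕ → E)} {i : ℕ}
    (h : i < L.length) : entry (extP v L z) i = some (L.get ⟨i, h⟩) := by
  rcases z with ⟨w, t⟩ | g
  · show (L ++ t)[i]? = _
    rw [List.getElem?_append_left h, List.getElem?_eq_getElem h, List.get_eq_getElem]
  · show some (extSeq L g i) = _
    rw [extSeq, dif_pos h]

lemma extSeq_ge {L : List E} {g : ℕ → E} {i : ℕ} (h : L.length ≤ i) :
    extSeq L g i = g (i - L.length) := by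
  rw [extSeq, dif_neg (by omega)]

lemma isBoundary_extP {v : V} {L : List E} {z : (V × List E) ⊕ (ℕ → E)}
    (hz : IsBoundary gs gr z) (hL : IsPathL gs gr v L)
    (hr : pathRng gr v L = startV gs z) : IsBoundary gs gr (extP v L z) := by
  rcases z with ⟨w, t⟩ | g
  · obtain ⟨ht, hreg⟩ := hz
    have hw : pathRng gr v L = w := hr
    constructor
    · refine ⟨?_, ?_⟩
      · intro e he
        rcases L with _ | ⟨b, L⟩
        · simp only [List.nil_append] at he
          have := ht.1 e he
          rw [this, ← hw]; rfl
        · simp at he ⊢; subst he; exact hL.1 _ rfl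
      · show List.IsChain _ _; rw [List.isChain_append]
        refine ⟨hL.2, ht.2, ?_⟩
        intro x hx y hy
        have hne : L ≠ [] := by rintro rfl; simp at hx
        rw [List.getLast?_eq_getLast hne] at hx
        simp at hx; subst hx
        have htne : t ≠ [] := by rintro rfl; simp at hy
        have : t.head? = some (t.head htne) := List.head?_eq_head _
        rw [this] at hy; simp at hy; subst hy
        rw [← pathRng_get (gr := gr) v L hne, hw]
        exact (ht.1 _ (List.head?_eq_head htne)).symm
    · show ¬ RegularVert gs (pathRng gr v (L ++ t))
      rw [pathRng_append, hw]
      exact hreg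
  · have hg : InfPath gs gr g := hz
    have hstart : pathRng gr v L = gs (g 0) := hr
    intro n
    show gr (extSeq L g n) = gs (extSeq L g (n + 1))
    rcases lt_trichotomy (n + 1) L.length with h | h | h
    · rw [extSeq, dif_pos (by omega), extSeq, dif_pos h]
      exact List.isChain_iff_getElem.mp hL.2 n (by omega)
    · rw [extSeq, dif_pos (by omega), extSeq_ge (by omega)]
      have h0 : n + 1 - L.length = 0 := by omega
      rw [h0]
      have hne : L ≠ [] := by rintro rfl; simp at h
      have hn : n = L.length - 1 := by omega
      subst hn
      have : L.getLast hne = L.get ⟨L.length - 1, by omega⟩ := by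
        simp [List.getLast_eq_getElem]
      rw [← this, ← pathRng_get (gr := gr) v L hne, hstart]
    · rw [extSeq_ge (by omega), extSeq_ge (by omega)]
      have : n + 1 - L.length = (n - L.length) + 1 := by omega
      rw [this]
      exact hg _


lemma head?_get {l : List E} (h : 0 < l.length) : l.head? = some (l.get ⟨0, h⟩) := by
  cases l
  · simp at h
  · rfl

lemma prefix_get_eq {l₁ l₂ : List E} (h : l₁ <+: l₂) (i : ℕ) (hi : i < l₁.length) :
    l₂.get ⟨i, lt_of_lt_of_le hi h.length_le⟩ = l₁.get ⟨i, hi⟩ := by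
  obtain ⟨r, rfl⟩ := h
  simp only [List.get_eq_getElem]; exact List.getElem_append_left hi

lemma hasPrefixP_entry {w : V} {m : List E} {x : BPath gs gr}
    (h : HasPrefixP gs gr w m x) {t : ℕ} (ht : t < m.length) :
    entry x.1 t = some (m.get ⟨t, ht⟩) := by
  obtain ⟨x, hx⟩ := x
  rcases x with ⟨v, l⟩ | f
  · obtain ⟨rfl, hpre⟩ := h
    show l[t]? = _
    obtain ⟨r, rfl⟩ := hpre
    rw [List.getElem?_append_left ht, List.getElem?_eq_getElem ht, List.get_eq_getElem]
  · obtain ⟨-, -, hget⟩ := h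
    show some (f t) = _
    rw [hget t ht]

lemma hasPrefixP_startV {w : V} {m : List E} {x : BPath gs gr}
    (h : HasPrefixP gs gr w m x) : startV gs x.1 = w := by
  obtain ⟨x, hx⟩ := x
  rcases x with ⟨v, l⟩ | f
  · exact h.1
  · rcases m with _ | ⟨e, m⟩
    · exact h.1 rfl
    · have h0 := h.2.2 0 (by simp)
      have := h.2.1 e rfl
      show gs (f 0) = w
      rw [h0]
      simpa using this

lemma hasPrefixP_extP {v : V} {L m : List E} {z : (V × List E) ⊕ (ℕ → E)}
    (hb : IsBoundary gs gr (extP v L z))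
    (hL : IsPathL gs gr v L) (hr : pathRng gr v L = startV gs z)
    (hm : m <+: L) :
    HasPrefixP gs gr v m ⟨extP v L z, hb⟩ := by
  have hgetv : ∀ (h : 0 < L.length), gs (L.get ⟨0, h⟩) = v := by
    intro h
    exact hL.1 _ (head?_get h)
  rcases z with ⟨w, t⟩ | g
  · exact ⟨rfl, hm.trans (List.prefix_append L t)⟩
  · refine ⟨?_, ?_, ?_⟩
    · intro hme
      rcases L with _ | ⟨a, L⟩
      · show gs (extSeq [] g 0) = v
        rw [extSeq_ge (by simp)]
        exact hr.symm
      · show gs (extSeq (a :: L) g 0) = v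
        rw [extSeq, dif_pos (by simp)]
        exact hgetv (by simp)
    · intro e he
      have hml : 0 < m.length := by
        rcases m with _ | ⟨a, m⟩
        · simp at he
        · simp
      rw [head?_get hml] at he
      simp only [Option.mem_def, Option.some_inj] at he
      subst he
      rw [← prefix_get_eq hm 0 hml]
      exact hgetv _
    · intro i hi
      show extSeq L g i = _
      rw [extSeq, dif_pos (lt_of_lt_of_le hi hm.length_le)]
      exact prefix_get_eq hm i hi

lemma agreeFrom_extP {v v' : V} {L L' : List E} {z : (V × List E) ⊕ (ℕ → E)}
    (hb : IsBoundary gs gr (extP v L z)) (hb' : IsBoundary gs gr (extP v' L' z))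
    {m n : ℕ} (hm : m ≤ L.length) (hn : n ≤ L'.length)
    (hd : L.drop m = L'.drop n)
    (hpr : pathRng gr v (L.take m) = pathRng gr v' (L'.take n)) :
    AgreeFrom gs gr m n ⟨extP v L z, hb⟩ ⟨extP v' L' z, hb'⟩ := by
  have hlen : L.length - m = L'.length - n := by
    have := congrArg List.length hd
    simpa using this
  rcases z with ⟨w, t⟩ | g
  · refine ⟨by simp; omega, by simp; omega, ?_, ?_⟩
    · rw [List.take_append_of_le_length hm, List.take_append_of_le_length hn, hpr]
    · rw [List.drop_append_of_le_length hm, List.drop_append_of_le_length hn, hd]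
  · intro i
    show extSeq L g (m + i) = extSeq L' g (n + i)
    rcases lt_or_ge (m + i) L.length with h | h
    · have h' : n + i < L'.length := by omega
      rw [extSeq, dif_pos h, extSeq, dif_pos h']
      have e1 : (L.drop m)[i]? = some (L.get ⟨m + i, h⟩) := by
        rw [List.getElem?_drop, List.getElem?_eq_getElem h, List.get_eq_getElem]
      have e2 : (L'.drop n)[i]? = some (L'.get ⟨n + i, h'⟩) := by
        rw [List.getElem?_drop, List.getElem?_eq_getElem h', List.get_eq_getElem]
      rw [hd, e2] at e1
      exact (Option.some_inj.mp e1).symm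
    · rw [extSeq_ge (by omega), extSeq_ge (by omega)]
      congr 1
      omega


/-- The periodic infinite path obtained by repeating a closed path. -/
def cyc (l : List E) (hne : l ≠ []) : ℕ → E :=
  fun t => l.get ⟨t % l.length, Nat.mod_lt _ (List.length_pos_iff.mpr hne)⟩

lemma cyc_lt {l : List E} (hne : l ≠ []) {t : ℕ} (ht : t < l.length) :
    cyc l hne t = l.get ⟨t, ht⟩ := by
  simp only [cyc]
  congr 1
  exact Fin.ext (Nat.mod_eq_of_lt ht)

lemma cyc_period {l : List E} (hne : l ≠ []) (t : ℕ) :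
    cyc l hne (l.length + t) = cyc l hne t := by
  simp only [cyc]
  congr 1
  exact Fin.ext (Nat.add_mod_left _ _)

lemma cyc_mem {l : List E} (hne : l ≠ []) (t : ℕ) : cyc l hne t ∈ l :=
  List.get_mem _ _

lemma cyc_start {w : V} {l : List E} (hp : IsPathL gs gr w l) (hne : l ≠ []) :
    gs (cyc l hne 0) = w := by
  rw [cyc_lt hne (List.length_pos_iff.mpr hne)]
  exact hp.1 _ (head?_get _)

lemma cyc_infPath {w : V} {l : List E} (hp : IsPathL gs gr w l) (hne : l ≠ [])
    (hr : pathRng gr w l = w) : InfPath gs gr (cyc l hne) := by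
  intro t
  have hn : 0 < l.length := List.length_pos_iff.mpr hne
  set n := l.length with hnn
  have hchain := List.isChain_iff_getElem.mp hp.2
  rcases lt_or_ge (t % n + 1) n with h | h
  · have h1 : (t + 1) % n = t % n + 1 := by
      have h2 : 1 % n = 1 := Nat.mod_eq_of_lt (by omega)
      rw [Nat.add_mod, h2]
      exact Nat.mod_eq_of_lt h
    have e : cyc l hne (t + 1) = l.get ⟨t % n + 1, by omega⟩ := by
      simp only [cyc]
      congr 1
      exact Fin.ext h1
    have e0 : cyc l hne t = l.get ⟨t % n, by omega⟩ := rfl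
    rw [e0, e]
    exact hchain (t % n) (by omega)
  · have hm : t % n = n - 1 := by have := Nat.mod_lt t hn; omega
    have h1 : (t + 1) % n = 0 := by
      rw [Nat.add_mod, hm]
      have : 1 % n = 1 % n := rfl
      rcases Nat.eq_or_lt_of_le hn with h2 | h2
      · simp [← h2]
      · have : 1 % n = 1 := Nat.mod_eq_of_lt (by omega)
        rw [this]
        have : (n - 1 + 1) = n := by omega
        rw [this, Nat.mod_self]
    have e1 : gr (l.getLast hne) = w := by rw [← pathRng_get (gr := gr) w l hne, hr]
    have e2 : gs (l.get ⟨0, hn⟩) = w := hp.1 _ (head?_get _)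
    have e3 : l.getLast hne = l.get ⟨n - 1, by omega⟩ := by
      simp [List.getLast_eq_getElem, hnn]
    rw [e3] at e1
    have e0 : cyc l hne t = l.get ⟨n - 1, by omega⟩ := by
      simp only [cyc]
      congr 1
      exact Fin.ext hm
    have e : cyc l hne (t + 1) = l.get ⟨0, hn⟩ := by
      simp only [cyc]
      congr 1
      exact Fin.ext h1
    rw [e0, e, e2]
    exact e1

lemma per_trans {f : ℕ → E} {b d : ℕ} (hd : 0 < d)
    (hper : ∀ i, b ≤ i → f (i + d) = f i) :
    ∀ i₁ i₂, b ≤ i₁ → b ≤ i₂ → i₁ % d = i₂ % d → f i₁ = f i₂ := by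
  have key : ∀ (t i : ℕ), b ≤ i → f (i + d * t) = f i := by
    intro t
    induction t with
    | zero => simp
    | succ t ih =>
      intro i hi
      have : i + d * (t + 1) = (i + d * t) + d := by ring
      rw [this, hper _ (by omega), ih i hi]
  have main : ∀ i₁ i₂, b ≤ i₁ → b ≤ i₂ → i₁ ≤ i₂ → i₁ % d = i₂ % d → f i₁ = f i₂ := by
    intro i₁ i₂ h₁ h₂ hle hmod
    obtain ⟨t, ht⟩ := (Nat.modEq_iff_dvd' hle).mp hmod
    have : i₂ = i₁ + d * t := by omega
    rw [this, key t i₁ h₁]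
  intro i₁ i₂ h₁ h₂ hmod
  rcases le_total i₁ i₂ with h | h
  · exact main _ _ h₁ h₂ h hmod
  · exact (main _ _ h₂ h₁ h hmod.symm).symm

lemma exists_uniform {β : Type*} {T : Set β} (hT : T.Finite) (P : β → ℕ → Prop)
    (mono : ∀ A N M, N ≤ M → P A N → P A M) (h : ∀ A ∈ T, ∃ N, P A N) :
    ∃ N, ∀ A ∈ T, P A N := by
  choose! N hN using h
  obtain ⟨M, hM⟩ := (hT.image N).bddAbove
  exact ⟨M, fun A hA => mono _ _ _ (hM (Set.mem_image_of_mem _ hA)) (hN A hA)⟩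

lemma generateOpen_finite_inter {X : Type*} {S : Set (Set X)} {U : Set X}
    (hU : TopologicalSpace.GenerateOpen S U) (γ : X) :
    γ ∈ U → ∃ T : Set (Set X), T.Finite ∧ T ⊆ S ∧ γ ∈ ⋂₀ T ∧ ⋂₀ T ⊆ U := by
  induction hU with
  | basic A hA =>
    intro hγ
    exact ⟨{A}, Set.finite_singleton _, by simpa, by simpa, by simp⟩
  | univ => exact fun _ => ⟨∅, Set.finite_empty, by simp, by simp, by simp⟩
  | inter A B hA hB ihA ihB =>
    intro hγ
    obtain ⟨T₁, h1, h2, h3, h4⟩ := ihA hγ.1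
    obtain ⟨T₂, g1, g2, g3, g4⟩ := ihB hγ.2
    refine ⟨T₁ ∪ T₂, h1.union g1, Set.union_subset h2 g2, ?_, ?_⟩
    · rw [Set.sInter_union]; exact ⟨h3, g3⟩
    · rw [Set.sInter_union]
      exact Set.subset_inter (Set.inter_subset_left.trans h4)
        (Set.inter_subset_right.trans g4)
  | sUnion S' hS' ih =>
    rintro ⟨A, hA, hmem⟩
    obtain ⟨T, h1, h2, h3, h4⟩ := ih A hA hmem
    exact ⟨T, h1, h2, h3, h4.trans (Set.subset_sUnion_of_mem hA)⟩


lemma exists_boundary (gs gr : E → V) (v : V) :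
    ∃ z : (V × List E) ⊕ (ℕ → E), IsBoundary gs gr z ∧ startV gs z = v := by
  by_cases h : ∃ l, IsPathL gs gr v l ∧ ¬ RegularVert gs (pathRng gr v l)
  · obtain ⟨l, hl, hreg⟩ := h
    exact ⟨.inl (v, l), ⟨hl, hreg⟩, rfl⟩
  · push_neg at h
    have hstep : ∀ l, IsPathL gs gr v l → ∃ e, gs e = pathRng gr v l := by
      intro l hl
      obtain ⟨-, e, he⟩ := h l hl
      exact ⟨e, he⟩
    choose nxt hnxt using hstep
    let lst : ∀ _ : ℕ, {l : List E // IsPathL gs gr v l} := fun n =>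
      Nat.rec ⟨[], isPathL_nil v⟩
        (fun _ ih => ⟨ih.1 ++ [nxt ih.1 ih.2], isPathL_concat ih.2 (hnxt ih.1 ih.2)⟩) n
    have hsucc : ∀ n, (lst (n + 1)).1 = (lst n).1 ++ [nxt (lst n).1 (lst n).2] :=
      fun _ => rfl
    set f : ℕ → E := fun n => nxt (lst n).1 (lst n).2 with hf
    have hrng : ∀ n, pathRng gr v (lst n).1 = gs (f n) := fun n => (hnxt _ _).symm
    have hinf : InfPath gs gr f := by
      intro n
      have : pathRng gr v (lst (n + 1)).1 = gr (f n) := by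
        rw [hsucc n, pathRng_concat]
      rw [← this, hrng (n + 1)]
    refine ⟨.inr f, hinf, ?_⟩
    show gs (f 0) = v
    rw [← hrng 0]
    rfl

lemma closed_path_exit (hL : ∀ v l, IsCycleP gs gr v l → HasExitP gs l) :
    ∀ (n : ℕ) (l : List E) (w : V), l.length ≤ n → IsPathL gs gr w l → l ≠ [] →
      pathRng gr w l = w → HasExitP gs l := by
  intro n
  induction n with
  | zero =>
    intro l w hlen _ hne _
    rw [Nat.le_zero, List.length_eq_zero_iff] at hlen
    exact absurd hlen hne
  | succ n ih =>
    intro l w hlen hp hne hr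
    by_cases hnd : (l.map gs).Nodup
    · exact hL w l ⟨hp, hne, hr, hnd⟩
    · rw [List.nodup_iff_injective_get] at hnd
      rw [Function.not_injective_iff] at hnd
      obtain ⟨⟨i, hi⟩, ⟨j, hj⟩, hget, hij⟩ := hnd
      simp only [List.length_map] at hi hj
      have hgij : gs (l.get ⟨i, hi⟩) = gs (l.get ⟨j, hj⟩) := by
        have e1 : (l.map gs).get ⟨i, by simpa using hi⟩ = gs (l.get ⟨i, hi⟩) :=
          by simp
        have e2 : (l.map gs).get ⟨j, by simpa using hj⟩ = gs (l.get ⟨j, hj⟩) :=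
          by simp
        rw [← e1, ← e2]
        exact hget
      have hijne : i ≠ j := by
        intro hc
        exact hij (Fin.ext (by simpa using hc))
      -- wlog i < j
      have key : ∀ i j (hi : i < l.length) (hj : j < l.length), i < j →
          gs (l.get ⟨i, hi⟩) = gs (l.get ⟨j, hj⟩) → HasExitP gs l := by
        clear hgij hijne hget hij hi hj
        intro i j hi hj hlt hgs
        set g : ℕ → E := fun t => cyc l hne (i + t) with hg
        have hginf : InfPath gs gr g := by
          intro t
          have h0 := cyc_infPath hp hne hr (i + t)
          have e : i + t + 1 = i + (t + 1) := by omega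
          rw [e] at h0
          exact h0
        set l₂ : List E := seqList g (j - i) with hl₂
        have hl₂ne : l₂ ≠ [] := by
          have : l₂.length = j - i := seqList_length g (j - i)
          intro hc
          rw [hc] at this
          simp at this
          omega
        have hmem₂ : ∀ a ∈ l₂, a ∈ l := by
          intro a ha
          rw [hl₂, seqList] at ha
          simp only [List.mem_map, List.mem_range] at ha
          obtain ⟨t, -, rfl⟩ := ha
          exact cyc_mem hne (i + t)
        have hstart : gs (g 0) = gs (l.get ⟨i, hi⟩) := by
          rw [hg]
          simp only [Nat.add_zero]
          rw [cyc_lt hne hi]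
        have hpath₂ : IsPathL gs gr (gs (g 0)) l₂ := isPathL_seqList hginf _
        have hrng₂ : pathRng gr (gs (g 0)) l₂ = gs (g 0) := by
          rw [hl₂, pathRng_seqList hginf]
          rw [hg]
          have : i + (j - i) = j := by omega
          simp only [this]
          rw [cyc_lt hne hj, hstart, hgs]
        obtain ⟨e, a, ha, h1, h2⟩ :=
          ih l₂ (gs (g 0)) (by rw [hl₂, seqList_length]; omega) hpath₂ hl₂ne hrng₂
        exact ⟨e, a, hmem₂ a ha, h1, h2⟩
      rcases lt_or_gt_of_ne hijne with h | h
      · exact key i j hi hj h hgij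
      · exact key j i hj hi h hgij.symm


lemma isPathL_of_concat {v : V} {t : List E} {e : E}
    (h : IsPathL gs gr v (t ++ [e])) : IsPathL gs gr v t ∧ gs e = pathRng gr v t := by
  obtain ⟨hh, hc⟩ := h
  change List.IsChain _ _ at hc; rw [List.isChain_append] at hc
  obtain ⟨hc1, -, hlink⟩ := hc
  rcases eq_or_ne t [] with rfl | hne
  · exact ⟨isPathL_nil v, hh e rfl⟩
  · refine ⟨⟨?_, hc1⟩, ?_⟩
    · intro a ha
      apply hh
      rw [List.head?_append_of_ne_nil _ hne]
      exact ha
    · have h2 := hlink (t.getLast hne) (List.getLast?_eq_getLast hne) e rfl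
      rw [pathRng_get (gr := gr) v t hne]
      exact h2.symm

section NoExit

variable {v : V} {l : List E}

lemma noexit_regular (hnx : ∀ e a, a ∈ l → gs e = gs a → e = a)
    {a : E} (ha : a ∈ l) : RegularVert gs (gs a) := by
  constructor
  · apply Set.Finite.subset (Set.finite_singleton a)
    intro e he
    exact hnx e a ha he
  · exact ⟨a, rfl⟩

lemma noexit_seq_forced (hp : IsPathL gs gr v l) (hne : l ≠ [])
    (hr : pathRng gr v l = v)
    (hnx : ∀ e a, a ∈ l → gs e = gs a → e = a)
    {g : ℕ → E} (hg0 : gs (g 0) = v) (hginf : InfPath gs gr g) :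
    ∀ i, g i = cyc l hne i := by
  have hcinf : InfPath gs gr (cyc l hne) := cyc_infPath hp hne hr
  intro i
  induction i with
  | zero =>
    apply hnx _ _ (cyc_mem hne 0)
    rw [hg0, cyc_start hp hne]
  | succ i ih =>
    apply hnx _ _ (cyc_mem hne (i + 1))
    rw [← hcinf i, ← ih, hginf i]

lemma noexit_list_forced (hp : IsPathL gs gr v l) (hne : l ≠ [])
    (hr : pathRng gr v l = v)
    (hnx : ∀ e a, a ∈ l → gs e = gs a → e = a) :
    ∀ t : List E, IsPathL gs gr v t →
      pathRng gr v t = gs (cyc l hne t.length) := by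
  have hcinf : InfPath gs gr (cyc l hne) := cyc_infPath hp hne hr
  intro t
  induction t using List.reverseRecOn with
  | nil =>
    intro _
    show v = gs (cyc l hne [].length)
    simp only [List.length_nil]
    rw [cyc_start hp hne]
  | append_singleton t e ih =>
    intro ht
    obtain ⟨ht', hgse⟩ := isPathL_of_concat ht
    have he : e = cyc l hne t.length := by
      apply hnx _ _ (cyc_mem hne t.length)
      rw [hgse, ih ht']
    rw [pathRng_concat, he, hcinf t.length]
    congr 1
    simp

end NoExit


lemma effective_implies_L
    (heff : @interior _ (gpdTop gs gr) {γ : GrGpd gs gr | γ.1.1 = γ.1.2.2} =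
      {γ : GrGpd gs gr | γ.1.1 = γ.1.2.2 ∧ γ.1.2.1 = 0}) :
    ∀ v l, IsCycleP gs gr v l → HasExitP gs l := by
  letI := gpdTop gs gr
  intro v l hcyc
  by_contra hnoexit
  have hnx : ∀ e a, a ∈ l → gs e = gs a → e = a := by
    intro e a ha hgs
    by_contra hne'
    exact hnoexit ⟨e, a, ha, hgs, hne'⟩
  obtain ⟨hp, hne, hr, -⟩ := hcyc
  set f := cyc l hne with hfdef
  have hinf : InfPath gs gr f := cyc_infPath hp hne hr
  have hbx : IsBoundary gs gr (Sum.inr f) := hinf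
  set x : BPath gs gr := ⟨Sum.inr f, hbx⟩ with hxdef
  have hagree : AgreeFrom gs gr l.length 0 x x := by
    intro i
    show cyc l hne (l.length + i) = cyc l hne (0 + i)
    rw [cyc_period hne i, Nat.zero_add]
  have hγmem : ∃ m n : ℕ, AgreeFrom gs gr m n x x ∧ ((l.length : ℤ)) = (m : ℤ) - (n : ℤ) :=
    ⟨l.length, 0, hagree, by simp⟩
  set γ : GrGpd gs gr := ⟨(x, (l.length : ℤ), x), hγmem⟩ with hγdef
  have hpre_l : HasPrefixP gs gr v l x := by
    refine ⟨fun _ => cyc_start hp hne, ?_, ?_⟩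
    · intro e he
      have h0 : 0 < l.length := List.length_pos_iff.mpr hne
      rw [head?_get h0] at he
      simp only [Option.mem_def, Option.some_inj] at he
      subst he
      exact hp.1 _ (head?_get h0)
    · intro i hi
      exact cyc_lt hne hi
  have hpre_nil : HasPrefixP gs gr v [] x :=
    ⟨fun _ => cyc_start hp hne, by simp, by simp⟩
  have hγZZ : γ ∈ ZZ gs gr v l v [] := ⟨hpre_l, hpre_nil, by simp [hγdef], hagree⟩
  have hZiso : ZZ gs gr v l v [] ⊆ {γ : GrGpd gs gr | γ.1.1 = γ.1.2.2} := by
    intro γ' hγ'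
    simp only [ZZ, Set.mem_setOf_eq] at hγ'
    obtain ⟨γ'', hprop⟩ := γ'
    obtain ⟨⟨x1, hbx1⟩, kq, ⟨y1, hby1⟩⟩ := γ''
    obtain ⟨hx', hy', -, hA'⟩ := hγ'
    show Subtype.mk x1 hbx1 = Subtype.mk y1 hby1
    apply Subtype.ext
    show x1 = y1
    rcases y1 with ⟨wy, ty⟩ | gy
    · exfalso
      obtain ⟨hty, hreg⟩ := hby1
      obtain ⟨hwv, -⟩ := hy'
      subst hwv
      apply hreg
      rw [noexit_list_forced hp hne hr hnx ty hty]
      exact noexit_regular hnx (cyc_mem hne ty.length)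
    · rcases x1 with ⟨vx, tx⟩ | gx
      · exact hA'.elim
      · have hgy0 : gs (gy 0) = v := hy'.1 rfl
        have hgy : ∀ i, gy i = f i := noexit_seq_forced hp hne hr hnx hgy0 hby1
        have hgx : ∀ i, gx i = f i := by
          intro i
          rcases lt_or_ge i l.length with h | h
          · rw [hx'.2.2 i h, ← cyc_lt hne h]
          · have h2 := hA' (i - l.length)
            have e : l.length + (i - l.length) = i := by omega
            rw [e] at h2
            rw [h2]
            simp only [List.length_nil, Nat.zero_add]
            rw [hgy]
            show cyc l hne (i - l.length) = cyc l hne i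
            rw [← cyc_period hne (i - l.length)]
            congr 1
        congr 1
        funext i
        rw [hgx, hgy]
  have hZopen : @IsOpen _ (gpdTop gs gr) (ZZ gs gr v l v []) := by
    apply TopologicalSpace.isOpen_generateFrom_of_mem
    refine ⟨v, l, v, [], ∅, Set.finite_empty, hp, isPathL_nil v, hr, by simp, by simp⟩
  have hmem : γ ∈ @interior _ (gpdTop gs gr) {γ : GrGpd gs gr | γ.1.1 = γ.1.2.2} :=
    mem_interior.mpr ⟨ZZ gs gr v l v [], hZiso, hZopen, hγZZ⟩
  rw [heff] at hmem
  have h0 : ((l.length : ℤ)) = 0 := hmem.2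
  have : l.length = 0 := by exact_mod_cast h0
  exact hne (List.length_eq_zero_iff.mp this)


lemma hasPrefixP_nil (x : BPath gs gr) : HasPrefixP gs gr (startV gs x.1) [] x := by
  obtain ⟨x1, hb⟩ := x
  rcases x1 with ⟨w, t⟩ | g
  · exact ⟨rfl, List.nil_prefix⟩
  · exact ⟨fun _ => rfl, by simp, by simp⟩

lemma agreeFrom_zero (x : BPath gs gr) : AgreeFrom gs gr 0 0 x x := by
  obtain ⟨x1, hb⟩ := x
  rcases x1 with ⟨w, t⟩ | g
  · exact ⟨Nat.zero_le _, Nat.zero_le _, rfl, rfl⟩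
  · exact fun _ => rfl

lemma ZZ_nil_subset_units (u : V) :
    ZZ gs gr u [] u [] ⊆ {γ : GrGpd gs gr | γ.1.1 = γ.1.2.2} := by
  intro γ' hγ'
  obtain ⟨γ'', hprop⟩ := γ'
  obtain ⟨⟨x1, hbx1⟩, kq, ⟨y1, hby1⟩⟩ := γ''
  obtain ⟨hx', hy', -, hA'⟩ := hγ'
  show Subtype.mk x1 hbx1 = Subtype.mk y1 hby1
  apply Subtype.ext
  show x1 = y1
  rcases x1 with ⟨vx, tx⟩ | gx <;> rcases y1 with ⟨vy, ty⟩ | gy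
  · obtain ⟨-, -, -, hdrop⟩ := hA'
    simp only [List.length_nil, List.drop_zero] at hdrop
    rw [hx'.1, hy'.1, hdrop]
  · exact hA'.elim
  · exact hA'.elim
  · congr 1
    funext i
    have := hA' i
    simpa using this

lemma units_subset_interior_iso :
    {γ : GrGpd gs gr | γ.1.1 = γ.1.2.2 ∧ γ.1.2.1 = 0} ⊆
      @interior _ (gpdTop gs gr) {γ : GrGpd gs gr | γ.1.1 = γ.1.2.2} := by
  letI := gpdTop gs gr
  rintro γ ⟨hxy, hk⟩
  set u := startV gs γ.1.1.1 with hu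
  apply mem_interior.mpr
  refine ⟨ZZ gs gr u [] u [], ZZ_nil_subset_units u, ?_, ?_, ?_, ?_, ?_⟩
  · apply TopologicalSpace.isOpen_generateFrom_of_mem
    exact ⟨u, [], u, [], ∅, Set.finite_empty, isPathL_nil u, isPathL_nil u, rfl,
      by simp, by simp⟩
  · exact hasPrefixP_nil γ.1.1
  · rw [← hxy]
    exact hasPrefixP_nil γ.1.1
  · simpa using hk
  · rw [← hxy]
    exact agreeFrom_zero γ.1.1


lemma hasPrefixP_congr {w : V} {m : List E} {x y : BPath gs gr} (h : x.1 = y.1) :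
    HasPrefixP gs gr w m x → HasPrefixP gs gr w m y := by
  obtain ⟨x1, hx⟩ := x
  obtain ⟨y1, hy⟩ := y
  simp only at h
  subst h
  exact id

lemma agreeFrom_congr {m n : ℕ} {x x' y y' : BPath gs gr}
    (h1 : x.1 = x'.1) (h2 : y.1 = y'.1) :
    AgreeFrom gs gr m n x y → AgreeFrom gs gr m n x' y' := by
  obtain ⟨x1, hx⟩ := x
  obtain ⟨x1', hx'⟩ := x'
  obtain ⟨y1, hy⟩ := y
  obtain ⟨y1', hy'⟩ := y'
  simp only at h1 h2
  subst h1
  subst h2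
  exact id

lemma seqList_congr {f g : ℕ → E} {n : ℕ} (h : ∀ t < n, f t = g t) :
    seqList f n = seqList g n := by
  apply List.ext_get
  · simp
  · intro i h1 h2
    rw [seqList_get, seqList_get]
    exact h i (by simpa using h1)

lemma mk_prefix_inr {w : V} {m : List E} {f : ℕ → E} (hb : IsBoundary gs gr (Sum.inr f))
    (hw : gs (f 0) = w) (hent : ∀ t (h : t < m.length), f t = m.get ⟨t, h⟩) :
    HasPrefixP gs gr w m (⟨Sum.inr f, hb⟩ : BPath gs gr) := by
  refine ⟨fun _ => hw, ?_, hent⟩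
  intro e he
  have hml : 0 < m.length := by
    rcases m with _ | ⟨a, m⟩
    · simp at he
    · simp
  rw [head?_get hml] at he
  simp only [Option.mem_def, Option.some_inj] at he
  subst he
  rw [← hent 0 hml, hw]

lemma get_concat_self (L : List E) (e : E) :
    (L ++ [e]).get ⟨L.length, by simp⟩ = e := by
  simp

lemma get_append_left {l₁ l₂ : List E} {i : ℕ} (h : i < l₁.length) :
    (l₁ ++ l₂).get ⟨i, by simp; omega⟩ = l₁.get ⟨i, h⟩ :=
  by simp only [List.get_eq_getElem]; exact List.getElem_append_left h

lemma get_append_right {l₁ l₂ : List E} {i : ℕ} (h₁ : l₁.length ≤ i)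
    (h₂ : i < l₁.length + l₂.length) :
    (l₁ ++ l₂).get ⟨i, by simp; omega⟩ = l₂.get ⟨i - l₁.length, by omega⟩ := by
  simp only [List.get_eq_getElem]
  rw [List.getElem_append_right h₁]


lemma concat_get_lt (f : ℕ → E) (e : E) {i n : ℕ} (h : i < n)
    (h' : i < (seqList f n ++ [e]).length) :
    (seqList f n ++ [e]).get ⟨i, h'⟩ = f i := by
  have h2 : i < (seqList f n).length := by simpa using h
  have := get_append_left (l₁ := seqList f n) (l₂ := [e]) h2
  rw [seqList_get] at this
  exact this

lemma concat_get_self (f : ℕ → E) (e : E) (n : ℕ)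
    (h' : n < (seqList f n ++ [e]).length) :
    (seqList f n ++ [e]).get ⟨n, h'⟩ = e := by
  have h₁ : (seqList f n).length ≤ n := by simp
  have h₂ : n < (seqList f n).length + ([e] : List E).length := by simp
  have := get_append_right (l₁ := seqList f n) (l₂ := [e]) h₁ h₂
  rw [this]
  simp


lemma interior_iso_subset_units (hL : ∀ v l, IsCycleP gs gr v l → HasExitP gs l) :
    @interior _ (gpdTop gs gr) {γ : GrGpd gs gr | γ.1.1 = γ.1.2.2} ⊆
      {γ : GrGpd gs gr | γ.1.1 = γ.1.2.2 ∧ γ.1.2.1 = 0} := by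
  letI := gpdTop gs gr
  intro γ hγ
  have hiso : γ.1.1 = γ.1.2.2 :=
    interior_subset (s := {γ : GrGpd gs gr | γ.1.1 = γ.1.2.2}) hγ
  refine ⟨hiso, ?_⟩
  by_contra hk
  obtain ⟨U, hUsub, hUopen, hγU⟩ := mem_interior.mp hγ
  obtain ⟨T, hTfin, hTS, hγT, hTsub⟩ := generateOpen_finite_inter hUopen γ hγU
  obtain ⟨⟨x, k, y⟩, hprop⟩ := γ
  have hxy : x = y := hiso
  subst hxy
  obtain ⟨m₀, n₀, hA₀, hk₀⟩ := hprop
  have hkk₀ : k = (m₀ : ℤ) - n₀ := hk₀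
  have hkne : k ≠ 0 := hk
  obtain ⟨x1, hbx⟩ := x
  rcases x1 with ⟨vx, tx⟩ | f
  · obtain ⟨h1, h2, -, hdrop⟩ := hA₀
    have hlen := congrArg List.length hdrop
    simp only [List.length_drop] at hlen
    have hmn : m₀ = n₀ := by omega
    subst hmn
    exact hkne (by rw [hkk₀]; ring)
  · have hA₀' : ∀ i, f (m₀ + i) = f (n₀ + i) := hA₀
    have hmn : m₀ ≠ n₀ := by
      intro h
      apply hkne
      rw [hkk₀, h]
      ring
    set d : ℕ := (m₀ - n₀) + (n₀ - m₀) with hddef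
    have hd : 0 < d := by omega
    set b : ℕ := m₀ + n₀ with hbdef
    have hper : ∀ i, b ≤ i → f (i + d) = f i := by
      intro i hi
      rcases le_total m₀ n₀ with hmn' | hmn'
      · have h1 := hA₀' (i - m₀)
        have e1 : m₀ + (i - m₀) = i := by omega
        have e2 : n₀ + (i - m₀) = i + d := by omega
        rw [e1, e2] at h1
        exact h1.symm
      · have h1 := hA₀' (i - n₀)
        have e1 : n₀ + (i - n₀) = i := by omega
        have e2 : m₀ + (i - n₀) = i + d := by omega
        rw [e1, e2] at h1
        exact h1
    have hmod := per_trans hd hper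
    have hinf : InfPath gs gr f := hbx
    have hg0inf : InfPath gs gr (fun t => f (b + t)) := by
      intro t
      have h1 := hinf (b + t)
      have e : b + t + 1 = b + (t + 1) := by omega
      rw [e] at h1
      exact h1
    have hcpath : IsPathL gs gr (gs (f (b + 0))) (seqList (fun t => f (b + t)) d) :=
      isPathL_seqList hg0inf d
    have hcrng : pathRng gr (gs (f (b + 0))) (seqList (fun t => f (b + t)) d)
        = gs (f (b + 0)) := by
      rw [pathRng_seqList hg0inf]
      have h1 : f (b + d) = f (b + 0) := by
        rw [Nat.add_zero]
        exact hper b le_rfl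
      rw [h1]
    have hcne : seqList (fun t => f (b + t)) d ≠ [] := by
      intro h
      have h1 := congrArg List.length h
      simp at h1
      omega
    obtain ⟨e, a, ha, hgsa, hea⟩ :=
      closed_path_exit hL d _ _ (by simp) hcpath hcne hcrng
    obtain ⟨t₀, ht₀d, hat₀⟩ : ∃ t₀, t₀ < d ∧ a = f (b + t₀) := by
      rw [seqList] at ha
      simp only [List.mem_map, List.mem_range] at ha
      obtain ⟨t₀, h1, h2⟩ := ha
      exact ⟨t₀, h1, h2.symm⟩
    obtain ⟨z, hbz, hzst⟩ := exists_boundary gs gr (gr e)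
    -- goodness of an index and validity of the perturbed paths
    have hLy : ∀ i, b ≤ i → i % d = (b + t₀) % d →
        IsPathL gs gr (gs (f 0)) (seqList f i ++ [e]) ∧
        pathRng gr (gs (f 0)) (seqList f i ++ [e]) = startV gs z := by
      intro i hib himod
      have hfi : gs e = gs (f i) := by
        rw [hgsa, hat₀]
        exact congrArg gs (hmod (b + t₀) i (by omega) hib himod.symm)
      refine ⟨isPathL_concat (isPathL_seqList hinf i) ?_, ?_⟩
      · rw [pathRng_seqList hinf]
        exact hfi
      · rw [pathRng_concat, hzst]
    have key : ∀ A ∈ T, ∃ N, ∀ (j : ℕ) (γ'' : GrGpd gs gr), N ≤ j →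
        b + n₀ + 1 ≤ j → j % d = (b + t₀) % d →
        γ''.1.1.1 = extP (gs (f 0)) (seqList f (j + m₀ - n₀) ++ [e]) z →
        γ''.1.2.2.1 = extP (gs (f 0)) (seqList f j ++ [e]) z →
        γ''.1.2.1 = k →
        γ'' ∈ A := by
      intro A hA
      obtain ⟨u, p, w, q, F, hFfin, hpp, hpq, hrpq, hFpaths, rfl⟩ := hTS hA
      have hγA := (Set.mem_sInter.mp hγT) _ hA
      obtain ⟨hγZ, hγF⟩ := hγA
      obtain ⟨hpx, hqx, hkpq, hApq⟩ := hγZ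
      have hkpq' : k = (p.length : ℤ) - q.length := hkpq
      have hApq' : ∀ i, f (p.length + i) = f (q.length + i) := hApq
      have hu : gs (f 0) = u := hasPrefixP_startV hpx
      have hw : gs (f 0) = w := hasPrefixP_startV hqx
      have hpent : ∀ t (h : t < p.length), f t = p.get ⟨t, h⟩ := hpx.2.2
      have hqent : ∀ t (h : t < q.length), f t = q.get ⟨t, h⟩ := hqx.2.2
      obtain ⟨M, hM⟩ := (hFfin.image List.length).bddAbove
      have hMα : ∀ α ∈ F, α.length ≤ M := fun α hα => hM ⟨α, hα, rfl⟩
      refine ⟨p.length + q.length + M + m₀ + n₀ + b + 1, ?_⟩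
      intro j γ'' hjN hjb hjmod hX hY hk''
      set jx := j + m₀ - n₀ with hjxdef
      have hpqmn : p.length + n₀ = q.length + m₀ := by
        have h1 : (p.length : ℤ) - q.length = (m₀ : ℤ) - n₀ := by rw [← hkpq, hk₀]
        omega
      have hjq : q.length ≤ j := by omega
      have hjxj : jx + n₀ = j + m₀ := by omega
      have hjxp : p.length ≤ jx := by omega
      have hjxb : b ≤ jx := by omega
      have hjxmod : jx % d = j % d := by
        rcases le_total m₀ n₀ with h' | h'
        · have h1 : j = jx + d := by omega
          rw [h1, Nat.add_mod_right]
        · have h1 : jx = j + d := by omega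
          rw [h1, Nat.add_mod_right]
      obtain ⟨hpathY, hrngY⟩ := hLy j (by omega) hjmod
      obtain ⟨hpathX, hrngX⟩ := hLy jx hjxb (hjxmod.trans hjmod)
      have hbY : IsBoundary gs gr (extP (gs (f 0)) (seqList f j ++ [e]) z) :=
        isBoundary_extP hbz hpathY hrngY
      have hbX : IsBoundary gs gr (extP (gs (f 0)) (seqList f jx ++ [e]) z) :=
        isBoundary_extP hbz hpathX hrngX
      have hpseq : p = seqList f p.length := by
        apply List.ext_get
        · simp
        · intro i h1 h2
          rw [seqList_get]
          exact (hpent i h1).symm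
      have hqseq : q = seqList f q.length := by
        apply List.ext_get
        · simp
        · intro i h1 h2
          rw [seqList_get]
          exact (hqent i h1).symm
      constructor
      · refine ⟨?_, ?_, ?_, ?_⟩
        · apply hasPrefixP_congr (x := ⟨_, hbX⟩) (by rw [hX])
          rw [← hu]
          apply hasPrefixP_extP hbX hpathX hrngX
          rw [hpseq]
          exact (seqList_prefix f hjxp).trans (List.prefix_append _ _)
        · apply hasPrefixP_congr (x := ⟨_, hbY⟩) (by rw [hY])
          rw [← hw]
          apply hasPrefixP_extP hbY hpathY hrngY
          rw [hqseq]
          exact (seqList_prefix f hjq).trans (List.prefix_append _ _)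
        · rw [hk'', hkpq']
        · apply agreeFrom_congr (x := ⟨_, hbX⟩) (y := ⟨_, hbY⟩) (by rw [hX]) (by rw [hY])
          apply agreeFrom_extP hbX hbY (by simp; omega) (by simp; omega)
          · rw [List.drop_append_of_le_length (by simp; omega),
              List.drop_append_of_le_length (by simp; omega)]
            congr 1
            rw [seqList_drop, seqList_drop]
            have hlen2 : jx - p.length = j - q.length := by omega
            rw [hlen2]
            exact seqList_congr (fun t _ => hApq' t)
          · rw [List.take_append_of_le_length (by simp; omega),
              List.take_append_of_le_length (by simp; omega),
              seqList_take f _ _ (by omega), seqList_take f _ _ (by omega),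
              pathRng_seqList hinf, pathRng_seqList hinf]
            have h1 := hApq' 0
            simp only [Nat.add_zero] at h1
            rw [h1]
      · intro hmem
        simp only [Set.mem_iUnion] at hmem
        obtain ⟨α, hαF, hγα⟩ := hmem
        apply hγF
        refine Set.mem_biUnion hαF ?_
        have hαM : α.length ≤ M := hMα α hαF
        obtain ⟨-, hqα, -, -⟩ := hγα
        have hent : ∀ t (h : t < (q ++ α).length), f t = (q ++ α).get ⟨t, h⟩ := by
          intro t ht
          have h1 := hasPrefixP_entry hqα ht
          rw [hY] at h1
          have htj : t < j := by
            simp only [List.length_append] at ht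
            omega
          have h2 : entry (extP (gs (f 0)) (seqList f j ++ [e]) z) t = some (f t) := by
            rw [entry_extP (by simp; omega)]
            rw [concat_get_lt f e htj]
          rw [h2] at h1
          exact Option.some_inj.mp h1
        refine ⟨?_, ?_, ?_, ?_⟩
        · -- HasPrefixP u (p ++ α)
          apply mk_prefix_inr hbx hu
          intro t ht
          simp only [List.length_append] at ht
          rcases lt_or_ge t p.length with h' | h'
          · rw [get_append_left h']
            exact hpent t h'
          · have hs : t - p.length < α.length := by omega
            rw [get_append_right h' (by omega)]
            have h2 : q.length + (t - p.length) < (q ++ α).length := by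
              simp only [List.length_append]
              omega
            have h3 := hent (q.length + (t - p.length)) h2
            rw [get_append_right (by omega) (by simp only [List.length_append] at h2 ⊢; omega)] at h3
            have h4 : q.length + (t - p.length) - q.length = t - p.length := by omega
            have h5 := hApq' (t - p.length)
            have h6 : p.length + (t - p.length) = t := by omega
            rw [h6] at h5
            rw [h5]
            rw [h3]
            congr 1
            exact Fin.ext h4
        · exact mk_prefix_inr hbx hw hent
        · show k = _
          rw [hkpq']
          simp only [List.length_append]
          push_cast
          omega
        · intro i
          have h1 := hApq' (α.length + i)
          have e1 : p.length + (α.length + i) = (p ++ α).length + i := by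
            simp only [List.length_append]
            omega
          have e2 : q.length + (α.length + i) = (q ++ α).length + i := by
            simp only [List.length_append]
            omega
          rw [e1, e2] at h1
          exact h1
    -- choose a uniform bound and a good index
    have keyP := exists_uniform hTfin
      (fun A N => ∀ (j : ℕ) (γ'' : GrGpd gs gr), N ≤ j →
        b + n₀ + 1 ≤ j → j % d = (b + t₀) % d →
        γ''.1.1.1 = extP (gs (f 0)) (seqList f (j + m₀ - n₀) ++ [e]) z →
        γ''.1.2.2.1 = extP (gs (f 0)) (seqList f j ++ [e]) z →
        γ''.1.2.1 = k →
        γ'' ∈ A)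
      (fun A N M hNM hP j γ'' hj => hP j γ'' (le_trans hNM hj))
      key
    obtain ⟨N, hN⟩ := keyP
    set j := (b + t₀) + d * (N + b + n₀ + 1) with hjdef
    have hjmod : j % d = (b + t₀) % d := Nat.add_mul_mod_self_left _ _ _
    have hjge : N ≤ j ∧ b + n₀ + 1 ≤ j := by
      have h1 : N + b + n₀ + 1 ≤ d * (N + b + n₀ + 1) := Nat.le_mul_of_pos_left _ hd
      omega
    set jx := j + m₀ - n₀ with hjxdef
    have hjxj : jx + n₀ = j + m₀ := by omega
    have hjxb : b ≤ jx := by omega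
    have hjxmod : jx % d = j % d := by
      rcases le_total m₀ n₀ with h' | h'
      · have h1 : j = jx + d := by omega
        rw [h1, Nat.add_mod_right]
      · have h1 : jx = j + d := by omega
        rw [h1, Nat.add_mod_right]
    obtain ⟨hpathY, hrngY⟩ := hLy j (by omega) hjmod
    obtain ⟨hpathX, hrngX⟩ := hLy jx hjxb (hjxmod.trans hjmod)
    have hbY : IsBoundary gs gr (extP (gs (f 0)) (seqList f j ++ [e]) z) :=
      isBoundary_extP hbz hpathY hrngY
    have hbX : IsBoundary gs gr (extP (gs (f 0)) (seqList f jx ++ [e]) z) :=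
      isBoundary_extP hbz hpathX hrngX
    have hagree' : AgreeFrom gs gr (jx + 1) (j + 1)
        ⟨extP (gs (f 0)) (seqList f jx ++ [e]) z, hbX⟩
        ⟨extP (gs (f 0)) (seqList f j ++ [e]) z, hbY⟩ := by
      apply agreeFrom_extP hbX hbY (by simp) (by simp)
      · rw [List.drop_eq_nil_of_le (by simp), List.drop_eq_nil_of_le (by simp)]
      · rw [List.take_of_length_le (by simp), List.take_of_length_le (by simp),
          pathRng_concat, pathRng_concat]
    have hkk : k = ((jx + 1 : ℕ) : ℤ) - ((j + 1 : ℕ) : ℤ) := by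
      rw [hkk₀]
      push_cast
      omega
    set γ' : GrGpd gs gr := ⟨(⟨extP (gs (f 0)) (seqList f jx ++ [e]) z, hbX⟩, k,
      ⟨extP (gs (f 0)) (seqList f j ++ [e]) z, hbY⟩), ⟨jx + 1, j + 1, hagree', hkk⟩⟩
      with hγ'def
    have hγ'T : γ' ∈ ⋂₀ T := Set.mem_sInter.mpr fun A hA =>
      hN A hA j γ' hjge.1 hjge.2 hjmod rfl rfl rfl
    have hγ'iso : γ'.1.1 = γ'.1.2.2 := hUsub (hTsub hγ'T)
    have hval : extP (gs (f 0)) (seqList f jx ++ [e]) z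
        = extP (gs (f 0)) (seqList f j ++ [e]) z := congrArg Subtype.val hγ'iso
    have hjne : j ≠ jx := by omega
    have hfa : ∀ i, b ≤ i → i % d = (b + t₀) % d → f i = a := by
      intro i hib himod
      rw [hat₀]
      exact hmod i (b + t₀) hib (by omega) himod
    rcases lt_or_gt_of_ne hjne with hlt | hlt
    · have h1 := congrArg (fun s => entry s j) hval
      rw [entry_extP (by simp; omega), entry_extP (by simp)] at h1
      rw [concat_get_lt f e hlt, concat_get_self f e j] at h1
      have h2 : f j = e := Option.some_inj.mp h1
      exact hea (h2.symm.trans (hfa j (by omega) hjmod))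
    · have h1 := congrArg (fun s => entry s jx) hval
      rw [entry_extP (by simp), entry_extP (by simp; omega)] at h1
      rw [concat_get_self f e jx, concat_get_lt f e hlt] at h1
      have h2 : e = f jx := Option.some_inj.mp h1
      exact hea (h2.trans (hfa jx hjxb (hjxmod.trans hjmod)))

end Helpers










/-- The graph groupoid `G_E` is effective — the interior of the
isotropy bundle `Iso(G_E) = {(x,k,y) : x = y}` equals the unit space
`{(x,0,x)}` — if and only if `E` satisfies condition (L): every cycle has an exit. -/
theorem graph_groupoid_effective_iff_condition_L {V E : Type*} (gs gr : E → V) :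
    (@interior _ (gpdTop gs gr) {γ : GrGpd gs gr | γ.1.1 = γ.1.2.2} =
      {γ : GrGpd gs gr | γ.1.1 = γ.1.2.2 ∧ γ.1.2.1 = 0}) ↔
    (∀ (v : V) (l : List E), IsCycleP gs gr v l → HasExitP gs l) := by
  constructor
  · exact effective_implies_L
  · intro hL
    exact Set.Subset.antisymm (interior_iso_subset_units hL) units_subset_interior_iso
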